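/- Let σ > 0 and q > 0. Then ∫_ℝ ( -1/(2qσ²) + a²/(2(qσ²)²) ) · f(a; qσ²)^{1-q} · f(a; σ²) da = 0; that is, the expectation under N(0, σ²) of the variance component of the modified score evaluated at the surrogate variance qσ² vanishes. -/

import Mathlib

open Real

/-- The density of the centered normal distribution with variance `v`:
`f(a; v) = (2πv)^(-1/2) exp(-a²/(2v))`. -/
noncomputable def normPdf (v a : ℝ) : ℝ :=
  (2 * Real.pi * v) ^ (-(1 : ℝ) / 2) * Real.exp (-a ^ 2 / (2 * v))

/-!
Since `(1 - q)/(qσ²) + 1/σ² = 1/(qσ²)`, the weighted density `f(a; qσ²)^(1-q) f(a; σ²)` is a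
constant multiple of `f(a; qσ²)`. The integral is therefore a multiple of the mean of the variance
score of `N(0, qσ²)` under its own law, which vanishes because the second moment of `N(0, v)` is `v`.
-/

open MeasureTheory ProbabilityTheory
open scoped NNReal

noncomputable def normVarScore (v a : ℝ) : ℝ :=
  -1 / (2 * v) + a ^ 2 / (2 * v ^ 2)

lemma normPdf_eq_gaussianPDFReal (v : ℝ≥0) (a : ℝ) : normPdf v a = gaussianPDFReal 0 v a := by
  rw [normPdf, gaussianPDFReal, sub_zero, sqrt_eq_rpow, ← rpow_neg (by positivity),
    neg_div]

lemma integral_sq_gaussianReal_zero (v : ℝ≥0) : ∫ x, x ^ 2 ∂gaussianReal 0 v = v := by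
  simpa using (variance_eq_integral (μ := gaussianReal 0 v) measurable_id.aemeasurable).symm

lemma integral_normVarScore_gaussianReal {v : ℝ≥0} (hv : v ≠ 0) :
    ∫ a, normVarScore v a ∂gaussianReal 0 v = 0 := by
  have hsq : Integrable (fun x : ℝ => x ^ 2) (gaussianReal 0 v) :=
    (memLp_id_gaussianReal 2).integrable_sq
  have hv' : (v : ℝ) ≠ 0 := by exact_mod_cast hv
  simp only [normVarScore]
  rw [integral_add (integrable_const _) (hsq.div_const _), integral_const, probReal_univ,
    integral_div, integral_sq_gaussianReal_zero, smul_eq_mul, one_mul]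
  field_simp
  ring

lemma integral_normVarScore_mul_normPdf {v : ℝ} (hv : 0 < v) :
    ∫ a, normVarScore v a * normPdf v a = 0 := by
  lift v to ℝ≥0 using hv.le
  have hv' : v ≠ 0 := by exact_mod_cast hv.ne'
  have h := integral_normVarScore_gaussianReal hv'
  rw [integral_gaussianReal_eq_integral_smul hv'] at h
  simpa only [normPdf_eq_gaussianPDFReal, smul_eq_mul, mul_comm] using h

lemma normPdf_rpow_one_sub_mul_normPdf {q s : ℝ} (hq : 0 < q) (hs : 0 < s) (a : ℝ) :
    normPdf (q * s) a ^ (1 - q) * normPdf s a =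
      (2 * π * (q * s)) ^ (q / 2) * (2 * π * s) ^ (-(1 : ℝ) / 2) * normPdf (q * s) a := by
  have hqs : 0 < 2 * π * (q * s) := by positivity
  have hexp : exp (-a ^ 2 / (2 * (q * s)) * (1 - q)) * exp (-a ^ 2 / (2 * s)) =
      exp (-a ^ 2 / (2 * (q * s))) := by
    rw [← exp_add]
    congr 1
    field_simp
    ring
  have hpow : (2 * π * (q * s)) ^ (-(1 : ℝ) / 2 * (1 - q)) =
      (2 * π * (q * s)) ^ (q / 2) * (2 * π * (q * s)) ^ (-(1 : ℝ) / 2) := by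
    rw [← rpow_add hqs]
    ring_nf
  simp only [normPdf]
  rw [mul_rpow (by positivity) (exp_pos _).le, ← rpow_mul hqs.le, ← exp_mul, hpow, ← hexp]
  ring

/-- For `σ > 0` and `q > 0`, the expectation under `N(0, σ²)` of the variance
component of the modified score evaluated at the surrogate variance `qσ²`
vanishes: `∫ (-1/(2qσ²) + a²/(2(qσ²)²)) f(a; qσ²)^(1-q) f(a; σ²) da = 0`. -/
theorem integral_variance_modified_score_eq_zero (σ q : ℝ) (hσ : 0 < σ) (hq : 0 < q) :
    ∫ a : ℝ, (-1 / (2 * (q * σ ^ 2)) + a ^ 2 / (2 * (q * σ ^ 2) ^ 2)) *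
        normPdf (q * σ ^ 2) a ^ (1 - q) * normPdf (σ ^ 2) a = 0 := by
  have hσ2 : 0 < σ ^ 2 := by positivity
  calc _ = ∫ a, (2 * π * (q * σ ^ 2)) ^ (q / 2) * (2 * π * σ ^ 2) ^ (-(1 : ℝ) / 2) *
        (normVarScore (q * σ ^ 2) a * normPdf (q * σ ^ 2) a) := by
        refine integral_congr_ae (ae_of_all _ fun a => ?_)
        dsimp only
        rw [mul_assoc, normPdf_rpow_one_sub_mul_normPdf hq hσ2, normVarScore]
        ring
    _ = 0 := by
      rw [integral_const_mul, integral_normVarScore_mul_normPdf (by positivity), mul_zero]
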